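/- For an odd positive integer $i \le n$, the polynomial $h^n_{n-i}(t) = \sum_{k=0}^{n} d^i_{n,k} t^k$ with $d^i_{n,k} = (-1)^n \frac{\sqrt{2n-2i+1}}{(-n)_i} \frac{(-n)_k (n-i+1)_k}{(k!)^2} \prod_{m=0}^{(i-1)/2}(n+k+1-2m) \prod_{m=0}^{(i-3)/2}(n-k-1-2m)$ satisfies $\int_0^1 h^n_{n-i}(t)^2\,dt = 1$. -/

import Mathlib

/-!
Write `d n i k = S · (-1)^k C(n,k) · G(k)`, where `S = waveScale n i` and `G = wavePoly n i` is a
polynomial of degree `≤ n`. Since the `n`-th finite difference kills polynomials of degree `< n`,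
`∑ₖ (-1)^k C(n,k) P(k) / (c + k) = P(-c) n! / (c)_{n+1}` whenever `deg P ≤ n`.
Hence the moment `∫ h t^l = ∑ₖ d_k / (l + k + 1)` equals `S n! G(-(l+1)) / (l+1)_{n+1}`, and
`∫ h² = S² n! ∑ₗ (-1)^l C(n,l) G(l) G(-(l+1)) / (l+1)_{n+1}`.
For odd `i` the roots of `G` make `G(l) G(-(l+1))` vanish for every `l ≤ n` except `l = n - i`,
and that last term equals `1` by factorial bookkeeping.
-/

open Finset

/-- Pochhammer symbol `(x)_k = x (x+1) ⋯ (x+k-1)`. -/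
noncomputable def poch (x : ℝ) (k : ℕ) : ℝ := (ascPochhammer ℝ k).eval x

/-- The coefficient `d^i_{n,k}` (for odd `i`): the product
`∏_{m=0}^{(i-1)/2}` has `(i+1)/2` factors and `∏_{m=0}^{(i-3)/2}` has `(i-1)/2` factors. -/
noncomputable def d (n i k : ℕ) : ℝ :=
  (-1) ^ n * Real.sqrt (2 * (n : ℝ) - 2 * i + 1) / poch (-(n : ℝ)) i *
    (poch (-(n : ℝ)) k * poch ((n : ℝ) - i + 1) k / ((k.factorial : ℝ)) ^ 2) *
    (∏ m ∈ Finset.range ((i + 1) / 2), ((n : ℝ) + k + 1 - 2 * m)) *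
    (∏ m ∈ Finset.range ((i - 1) / 2), ((n : ℝ) - k - 1 - 2 * m))

/-- The wavelet polynomial `h^n_{n-i}(t) = ∑_{k=0}^n d^i_{n,k} t^k` on `[0,1)`. -/
noncomputable def h (n i : ℕ) (t : ℝ) : ℝ := ∑ k ∈ Finset.range (n + 1), d n i k * t ^ k

open Polynomial fwdDiff

lemma neg_one_pow_sq (m : ℕ) : ((-1 : ℝ) ^ m) ^ 2 = 1 := by
  rw [← pow_mul, pow_mul', neg_one_sq, one_pow]

lemma sum_range_neg_one_pow_mul_choose_eq_fwdDiff_iter (f : ℝ → ℝ) (y : ℝ) (n : ℕ) :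
    ∑ k ∈ range (n + 1), (-1) ^ k * (n.choose k : ℝ) * f (y + k)
      = (-1) ^ n * (Δ_[1])^[n] f y := by
  rw [fwdDiff_iter_eq_sum_shift, mul_sum]
  refine sum_congr rfl fun k hk => ?_
  obtain ⟨m, rfl⟩ := Nat.exists_eq_add_of_le (Nat.lt_succ_iff.mp (mem_range.mp hk))
  rw [Nat.add_sub_cancel_left, zsmul_eq_mul, nsmul_eq_mul, mul_one]
  push_cast
  linear_combination (-(-1 : ℝ) ^ k * (k + m).choose k * f (y + k)) * neg_one_pow_sq m

lemma Polynomial.sum_range_neg_one_pow_mul_choose_mul_eval_eq_zero {P : ℝ[X]} {n : ℕ}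
    (hP : P.degree < n) :
    ∑ k ∈ range (n + 1), (-1) ^ k * (n.choose k : ℝ) * P.eval (k : ℝ) = 0 := by
  rcases eq_or_ne P 0 with rfl | hP0
  · simp
  have := sum_range_neg_one_pow_mul_choose_eq_fwdDiff_iter P.eval 0 n
  simp only [zero_add] at this
  rw [this, Polynomial.fwdDiff_iter_eq_zero_of_degree_lt
    ((natDegree_lt_iff_degree_lt hP0).mpr hP), Pi.zero_apply, mul_zero]

lemma poch_pos {x : ℝ} (hx : 0 < x) (n : ℕ) : 0 < poch x n := ascPochhammer_pos n x hx

lemma poch_succ_eq_mul_poch_add_one (x : ℝ) (n : ℕ) : poch x (n + 1) = x * poch (x + 1) n := by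
  simp [poch, ascPochhammer_succ_left, eval_comp]

lemma poch_succ (x : ℝ) (n : ℕ) : poch x (n + 1) = poch x n * (x + n) :=
  ascPochhammer_succ_eval n x

lemma poch_neg_natCast (n k : ℕ) : poch (-n) k = (-1) ^ k * k.factorial * n.choose k := by
  rw [poch, ascPochhammer_eval_neg_eq_descPochhammer, descPochhammer_eval_eq_descFactorial,
    Nat.descFactorial_eq_factorial_mul_choose]
  push_cast
  ring

lemma fwdDiff_iter_inv {x : ℝ} (hx : 0 < x) (n : ℕ) :
    (Δ_[1])^[n] (fun y : ℝ => y⁻¹) x = (-1) ^ n * n.factorial / poch x (n + 1) := by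
  induction n generalizing x with
  | zero => simp [poch]
  | succ n ih =>
    rw [Function.iterate_succ_apply', fwdDiff, ih hx, ih (by linarith)]
    have h₁ := poch_succ_eq_mul_poch_add_one x (n + 1)
    have h₂ := poch_succ x (n + 1)
    have h₃ := (poch_pos (x := x + 1) (by linarith) (n + 1)).ne'
    have h₄ := (poch_pos hx (n + 1)).ne'
    rw [h₁, div_sub_div _ _ h₃ h₄,
      div_eq_div_iff (mul_ne_zero h₃ h₄) (mul_ne_zero hx.ne' h₃)]
    push_cast [Nat.factorial_succ] at h₂ ⊢
    linear_combination (-1 : ℝ) ^ n * n.factorial * poch (x + 1) (n + 1) * (h₂.symm.trans h₁)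

lemma sum_range_neg_one_pow_mul_choose_div_add {c : ℝ} (hc : 0 < c) (n : ℕ) :
    ∑ k ∈ range (n + 1), (-1) ^ k * (n.choose k : ℝ) / (c + k)
      = n.factorial / poch c (n + 1) := by
  have h := sum_range_neg_one_pow_mul_choose_eq_fwdDiff_iter (fun y => y⁻¹) c n
  rw [fwdDiff_iter_inv hc, ← mul_div_assoc, ← mul_assoc, ← pow_add, ← two_mul, pow_mul] at h
  simpa [div_eq_mul_inv] using h

lemma Polynomial.sum_range_neg_one_pow_mul_choose_mul_eval_div_add {P : ℝ[X]} {n : ℕ}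
    (hP : P.natDegree ≤ n) {c : ℝ} (hc : 0 < c) :
    ∑ k ∈ range (n + 1), (-1) ^ k * (n.choose k : ℝ) * P.eval (k : ℝ) / (c + k)
      = P.eval (-c) * n.factorial / poch c (n + 1) := by
  set Q := P /ₘ (X - C (-c))
  have hPQ : ∀ x, P.eval x = (x + c) * Q.eval x + P.eval (-c) := fun x => by
    conv_lhs => rw [← modByMonic_add_div P (X - C (-c)), modByMonic_X_sub_C_eq_C_eval]
    simp only [eval_add, eval_C, eval_mul, eval_sub, eval_X, sub_neg_eq_add]
    ring
  have hQ : Q.degree < n := by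
    rcases eq_or_ne P 0 with rfl | hP0
    · simp [Q]
    calc Q.degree < P.degree :=
          degree_divByMonic_lt P _ hP0 (by rw [degree_X_sub_C]; exact one_pos)
      _ ≤ n := degree_le_of_natDegree_le hP
  calc ∑ k ∈ range (n + 1), (-1) ^ k * (n.choose k : ℝ) * P.eval (k : ℝ) / (c + k)
      = ∑ k ∈ range (n + 1), (-1) ^ k * (n.choose k : ℝ) * Q.eval (k : ℝ)
          + P.eval (-c) * ∑ k ∈ range (n + 1), (-1) ^ k * (n.choose k : ℝ) / (c + k) := by
        rw [mul_sum, ← sum_add_distrib]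
        refine sum_congr rfl fun k _ => ?_
        have : c + k ≠ 0 := by positivity
        rw [hPQ]
        field_simp
        ring
    _ = P.eval (-c) * n.factorial / poch c (n + 1) := by
        rw [sum_range_neg_one_pow_mul_choose_mul_eval_eq_zero hQ,
          sum_range_neg_one_pow_mul_choose_div_add hc, zero_add, mul_div_assoc]

lemma integral_sq_sum_mul_pow (c : ℕ → ℝ) (N : ℕ) :
    ∫ t in (0 : ℝ)..1, (∑ k ∈ range N, c k * t ^ k) ^ 2
      = ∑ l ∈ range N, c l * ∑ k ∈ range N, c k / (l + k + 1) := by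
  have hsq : ∀ t : ℝ, (∑ k ∈ range N, c k * t ^ k) ^ 2
      = ∑ l ∈ range N, ∑ k ∈ range N, c l * c k * t ^ (l + k) := fun t => by
    rw [sq, sum_mul_sum]
    exact sum_congr rfl fun l _ => sum_congr rfl fun k _ => by ring
  simp_rw [hsq]
  rw [intervalIntegral.integral_finsetSum fun l _ =>
    Continuous.intervalIntegrable (by fun_prop) 0 1]
  refine sum_congr rfl fun l _ => ?_
  rw [intervalIntegral.integral_finsetSum fun k _ =>
    Continuous.intervalIntegrable (by fun_prop) 0 1, mul_sum]
  refine sum_congr rfl fun k _ => ?_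
  rw [intervalIntegral.integral_const_mul, integral_pow]
  push_cast
  ring

lemma prod_range_mul_prod_range_eq_descPochhammer_eval (N : ℝ) (a : ℕ) :
    (∏ m ∈ range (a + 1), (N - 2 * m)) * ∏ m ∈ range a, (N - 1 - 2 * m)
      = (descPochhammer ℝ (2 * a + 1)).eval N := by
  rw [descPochhammer_eval_eq_prod_range]
  induction a with
  | zero => simp
  | succ a ih =>
    rw [show 2 * (a + 1) + 1 = 2 * a + 1 + 1 + 1 by ring,
      prod_range_succ (fun m : ℕ => N - 2 * m) (a + 1),
      prod_range_succ (fun m : ℕ => N - 1 - 2 * m),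
      prod_range_succ _ (2 * a + 1 + 1), prod_range_succ _ (2 * a + 1), ← ih]
    push_cast
    ring

-- The polynomial in `k` hidden in `d n i k`: `(n - i + 1)_k / k! = (k + 1)_{n-i} / (n - i)!`.
noncomputable def wavePoly (n i : ℕ) : ℝ[X] :=
  (ascPochhammer ℝ (n - i)).comp (X + 1) *
    (∏ m ∈ range ((i + 1) / 2), (C (n : ℝ) + X + 1 - C (2 * m : ℝ))) *
    ∏ m ∈ range ((i - 1) / 2), (C (n : ℝ) - X - 1 - C (2 * m : ℝ))

noncomputable def waveScale (n i : ℕ) : ℝ :=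
  (-1) ^ n * Real.sqrt (2 * (n : ℝ) - 2 * i + 1) / (poch (-n) i * (n - i).factorial)

lemma wavePoly_eval (n i : ℕ) (x : ℝ) :
    (wavePoly n i).eval x = poch (x + 1) (n - i) *
      (∏ m ∈ range ((i + 1) / 2), ((n : ℝ) + x + 1 - 2 * m)) *
      ∏ m ∈ range ((i - 1) / 2), ((n : ℝ) - x - 1 - 2 * m) := by
  simp [wavePoly, poch, eval_prod, eval_comp]

lemma natDegree_wavePoly {n i : ℕ} (hin : i ≤ n) : (wavePoly n i).natDegree ≤ n := by
  have hprod : ∀ (s : Finset ℕ) (f : ℕ → ℝ[X]), (∀ m, (f m).natDegree ≤ 1) →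
      (∏ m ∈ s, f m).natDegree ≤ #s := fun s f hf =>
    (natDegree_prod_le s f).trans (by simpa using sum_le_sum fun m _ => hf m)
  have hpoch : ((ascPochhammer ℝ (n - i)).comp (X + 1)).natDegree ≤ n - i :=
    natDegree_comp_le.trans (by rw [ascPochhammer_natDegree, ← C_1, natDegree_X_add_C, mul_one])
  calc (wavePoly n i).natDegree ≤ n - i + (i + 1) / 2 + (i - 1) / 2 := by
        refine natDegree_mul_le.trans (add_le_add (natDegree_mul_le.trans (add_le_add hpoch ?_)) ?_)
        all_goals exact (hprod _ _ fun m => by compute_degree).trans_eq (card_range _)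
    _ ≤ n := by omega

lemma d_eq_waveScale_mul_eval_wavePoly {n i : ℕ} (hin : i ≤ n) (k : ℕ) :
    d n i k = waveScale n i * ((-1) ^ k * n.choose k) * (wavePoly n i).eval (k : ℝ) := by
  have hcast : (n : ℝ) - i + 1 = ((n - i : ℕ) : ℝ) + 1 := by
    push_cast [Nat.cast_sub hin]; ring
  have h₁ := factorial_mul_ascPochhammer ℝ (n - i) k
  have h₂ := factorial_mul_ascPochhammer ℝ k (n - i)
  rw [add_comm k] at h₂
  have hpoch : poch (((n - i : ℕ) : ℝ) + 1) k
      = poch ((k : ℝ) + 1) (n - i) * k.factorial / (n - i).factorial := by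
    rw [eq_div_iff (by positivity)]
    simp only [poch]
    linear_combination h₁ - h₂
  rw [d, waveScale, wavePoly_eval, poch_neg_natCast, poch_neg_natCast, hcast, hpoch]
  field_simp

lemma sum_range_d_div {n i : ℕ} (hin : i ≤ n) (l : ℕ) :
    ∑ k ∈ range (n + 1), d n i k / (l + k + 1)
      = waveScale n i * (wavePoly n i).eval (-((l : ℝ) + 1)) * n.factorial
        / poch (l + 1) (n + 1) := by
  rw [mul_assoc, mul_div_assoc, ← (wavePoly n i).sum_range_neg_one_pow_mul_choose_mul_eval_div_add
    (natDegree_wavePoly hin) (by positivity : (0 : ℝ) < l + 1), mul_sum]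
  refine sum_congr rfl fun k _ => ?_
  rw [d_eq_waveScale_mul_eval_wavePoly hin]
  ring

lemma d_mul_sum_range_d_div {n i : ℕ} (hin : i ≤ n) (l : ℕ) :
    d n i l * ∑ k ∈ range (n + 1), d n i k / (l + k + 1)
      = waveScale n i ^ 2 * n.factorial * ((-1) ^ l * n.choose l)
        * ((wavePoly n i).eval (l : ℝ) * (wavePoly n i).eval (-((l : ℝ) + 1)))
        / poch (l + 1) (n + 1) := by
  rw [sum_range_d_div hin, d_eq_waveScale_mul_eval_wavePoly hin]
  ring

-- For `l < n - i` the Pochhammer factor of `G(-(l+1))` vanishes; otherwise `n - l < i`, and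
-- depending on the parity of `n - l` a factor of the first product vanishes at `-(l+1)` or one of
-- the second product at `l`.
lemma wavePoly_eval_mul_eval_neg_eq_zero {n a l : ℕ} (hl : l ≤ n)
    (hlj : l ≠ n - (2 * a + 1)) :
    (wavePoly n (2 * a + 1)).eval (l : ℝ) * (wavePoly n (2 * a + 1)).eval (-((l : ℝ) + 1))
      = 0 := by
  have h₁ : (2 * a + 1 + 1) / 2 = a + 1 := by omega
  have h₂ : (2 * a + 1 - 1) / 2 = a := by omega
  simp only [wavePoly_eval, h₁, h₂]
  rcases lt_or_gt_of_ne hlj with hlt | hgt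
  · have : poch (-(l + 1) + 1) (n - (2 * a + 1)) = 0 := by
      rw [show -((l : ℝ) + 1) + 1 = -l by ring]
      exact ascPochhammer_eval_neg_coe_nat_of_lt hlt
    simp only [this, mul_zero, zero_mul]
  rcases Nat.even_or_odd' (n - l) with ⟨m, hm | hm⟩
  · have hn : (n : ℝ) = l + 2 * m := by exact_mod_cast (by omega : n = l + 2 * m)
    have : ∏ k ∈ range (a + 1), ((n : ℝ) + -(l + 1) + 1 - 2 * k) = 0 :=
      prod_eq_zero (mem_range.mpr (by omega : m < a + 1)) (by rw [hn]; ring)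
    simp only [this, mul_zero, zero_mul]
  · have hn : (n : ℝ) = l + 2 * m + 1 := by exact_mod_cast (by omega : n = l + 2 * m + 1)
    have : ∏ k ∈ range a, ((n : ℝ) - l - 1 - 2 * k) = 0 :=
      prod_eq_zero (mem_range.mpr (by omega : m < a)) (by rw [hn]; ring)
    simp only [this, mul_zero, zero_mul]

lemma wavePoly_eval_mul_eval_neg_self (j a : ℕ) :
    (wavePoly (j + (2 * a + 1)) (2 * a + 1)).eval (j : ℝ)
      * (wavePoly (j + (2 * a + 1)) (2 * a + 1)).eval (-((j : ℝ) + 1)) * (2 * j + 1).factorial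
      = (-1) ^ j * ((2 * j).factorial * (2 * a + 1).factorial * (2 * j + 2 * a + 2).factorial) := by
  have h₁ : (2 * a + 1 + 1) / 2 = a + 1 := by omega
  have h₂ : (2 * a + 1 - 1) / 2 = a := by omega
  rw [wavePoly_eval, wavePoly_eval, h₁, h₂, Nat.add_sub_cancel]
  have hneg : poch (-((j : ℝ) + 1) + 1) j = (-1) ^ j * j.factorial := by
    rw [show -((j : ℝ) + 1) + 1 = -j by ring, poch_neg_natCast, Nat.choose_self, Nat.cast_one,
      mul_one]
  have hpos : (j.factorial : ℝ) * poch (j + 1) j = (2 * j).factorial := by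
    rw [poch, factorial_mul_ascPochhammer, two_mul]
  -- The four products pair up into the falling factorials `(2j+2a+2)⋯(2j+2)` and `(2a+1)!`.
  have htop : (∏ m ∈ range (a + 1), ((↑(j + (2 * a + 1)) : ℝ) + j + 1 - 2 * m))
      * (∏ m ∈ range a, ((↑(j + (2 * a + 1)) : ℝ) - -((j : ℝ) + 1) - 1 - 2 * m))
      * (2 * j + 1).factorial = (2 * j + 2 * a + 2).factorial := by
    have hprod :=
      prod_range_mul_prod_range_eq_descPochhammer_eval ((2 * j + 2 * a + 2 : ℕ) : ℝ) a
    have hfact := Nat.factorial_mul_descFactorial (show 2 * a + 1 ≤ 2 * j + 2 * a + 2 by omega)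
    rw [show 2 * j + 2 * a + 2 - (2 * a + 1) = 2 * j + 1 by omega] at hfact
    rw [descPochhammer_eval_eq_descFactorial] at hprod
    rw [← hfact, Nat.cast_mul, ← hprod, mul_comm]
    congr 1
    congr 1 <;> exact prod_congr rfl fun m _ => by push_cast; ring
  have hbot :
      (∏ m ∈ range (a + 1), ((↑(j + (2 * a + 1)) : ℝ) + -((j : ℝ) + 1) + 1 - 2 * m))
        * (∏ m ∈ range a, ((↑(j + (2 * a + 1)) : ℝ) - j - 1 - 2 * m))
        = (2 * a + 1).factorial := by
    have hprod := prod_range_mul_prod_range_eq_descPochhammer_eval ((2 * a + 1 : ℕ) : ℝ) a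
    rw [descPochhammer_eval_eq_descFactorial, Nat.descFactorial_self] at hprod
    rw [← hprod]
    congr 1 <;> exact prod_congr rfl fun m _ => by push_cast; ring
  rw [hneg, ← hpos, ← hbot, ← htop]
  ring

lemma waveScale_sq_mul_eval_mul_eval_neg_self (j a : ℕ) :
    waveScale (j + (2 * a + 1)) (2 * a + 1) ^ 2 * (j + (2 * a + 1)).factorial
      * ((-1) ^ j * (j + (2 * a + 1)).choose j)
      * ((wavePoly (j + (2 * a + 1)) (2 * a + 1)).eval (j : ℝ)
        * (wavePoly (j + (2 * a + 1)) (2 * a + 1)).eval (-((j : ℝ) + 1)))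
      / poch (j + 1) (j + (2 * a + 1) + 1) = 1 := by
  have hG := eq_div_of_mul_eq (by positivity) (wavePoly_eval_mul_eval_neg_self j a)
  set i := 2 * a + 1
  set n := j + i
  have hsqrt : Real.sqrt (2 * (n : ℝ) - 2 * i + 1) ^ 2 = 2 * j + 1 := by
    rw [Real.sq_sqrt (by simp only [n]; push_cast; linarith)]
    simp only [n]; push_cast; ring
  have hpoch : poch (j + 1) (n + 1) = (2 * j + 2 * a + 2).factorial / j.factorial := by
    rw [eq_div_iff (by positivity), mul_comm, poch, factorial_mul_ascPochhammer]
    congr 2; omega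
  have hchoose : (n.choose j : ℝ) = n.factorial / (i.factorial * j.factorial) := by
    rw [eq_div_iff (by positivity), ← mul_assoc]
    exact_mod_cast add_comm i j ▸ Nat.add_choose_mul_factorial_mul_factorial i j
  have hsymm : n.choose i = n.choose j := Nat.choose_symm_add.symm
  have hfact : ((2 * j + 1).factorial : ℝ) = (2 * j + 1) * (2 * j).factorial := by
    push_cast [Nat.factorial_succ]; ring
  have hj : n - i = j := by omega
  simp only [waveScale, poch_neg_natCast, hsymm, hj, div_pow, mul_pow, hsqrt, neg_one_pow_sq,
    hG, hfact, hpoch, hchoose]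
  field_simp
  exact neg_one_pow_sq j

theorem stmt_7_general (n i : ℕ) (hodd : Odd i) (hin : i ≤ n) :
    ∫ t in (0:ℝ)..1, (h n i t) ^ 2 = 1 := by
  obtain ⟨a, rfl⟩ := hodd
  obtain ⟨j, rfl⟩ := Nat.exists_eq_add_of_le' hin
  simp only [h, integral_sq_sum_mul_pow]
  rw [sum_eq_single_of_mem j (mem_range.mpr (by omega)) fun l hl hlj => ?_]
  · rw [d_mul_sum_range_d_div hin]
    exact waveScale_sq_mul_eval_mul_eval_neg_self j a
  · rw [d_mul_sum_range_d_div hin,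
      wavePoly_eval_mul_eval_neg_eq_zero (Nat.lt_succ_iff.mp (mem_range.mp hl)) (by omega)]
    simp

theorem stmt_7 (n i : ℕ) (hodd : Odd i) (hi : 0 < i) (hin : i ≤ n) :
    ∫ t in (0:ℝ)..1, (h n i t) ^ 2 = 1 :=
  stmt_7_general n i hodd hin
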